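/- Let β ∈ [0,∞), f ∈ H, let (γ_i)_{i≥0} be a sequence in (0,1], and let (x_i)_{i≥1} be a sequence in Ω such that for every i ≥ 0 and every z ∈ Ω: γ_i · |(f − I_{X_i} f)(z)|^β · P_{X_i}(z)^{1−β} ≤ |(f − I_{X_i} f)(x_{i+1})|^β · P_{X_i}(x_{i+1})^{1−β}. If for some n ≥ 1 and ε > 0 the closed absolutely convex hull acx(Φ(Ω)) admits an (n, ε)-cover, then min_{n+1 ≤ i ≤ 2n} ‖r_i‖_∞ ≤ γ̄^{−1} · (√5 · n^{(1−β)/2} · ε)^{1/max(1,β)} · ‖r_{n+1}‖_H, where γ̄ := (∏_{i=n+1}^{2n} γ_i)^{1/n}. -/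

import Mathlib

open scoped RealInnerProductSpace

variable {H : Type*} [NormedAddCommGroup H] [InnerProductSpace ℝ H] {Ω : Type*}

/-- The kernel interpolant `I_X f`: the orthogonal projection of `f` onto
`V(X) = span {Φ(x) : x ∈ X}`. -/
noncomputable def interp (Φ : Ω → H) (X : Finset Ω) (f : H) : H :=
  haveI : FiniteDimensional ℝ (Submodule.span ℝ (Φ '' (X : Set Ω))) :=
    FiniteDimensional.span_of_finite ℝ (X.finite_toSet.image Φ)
  (Submodule.orthogonalProjectionOnto (Submodule.span ℝ (Φ '' (X : Set Ω))) f : H)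

/-- The power function `P_X(z) = ‖Φ(z) − Π_{V(X)} Φ(z)‖`. -/
noncomputable def powerFun (Φ : Ω → H) (X : Finset Ω) (z : Ω) : ℝ :=
  ‖Φ z - interp Φ X (Φ z)‖

/-- The sup norm `‖g‖_∞ = sup_{x ∈ Ω} |g(x)|`, where `g(x) = ⟪g, Φ(x)⟫`. -/
noncomputable def supNorm (Φ : Ω → H) (g : H) : ℝ := ⨆ x : Ω, |⟪g, Φ x⟫|

/-- `X_i = {x_1, …, x_i}` (so `X_0 = ∅`). -/
noncomputable def Xset (x : ℕ → Ω) (i : ℕ) : Finset Ω := by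
  classical exact (Finset.Icc 1 i).image x

/-- The closed absolutely convex (symmetric convex) hull of `K`. -/
def acx (K : Set H) : Set H :=
  closure {y : H | ∃ (m : ℕ) (c : Fin m → ℝ) (g : Fin m → H),
    (∀ j, g j ∈ K) ∧ (∑ j, |c j|) ≤ 1 ∧ y = ∑ j, c j • g j}

/-- `S` admits an `(n, ε)`-cover: it can be covered by at most `2^n` closed balls of
radius `ε`. -/
def HasCover (S : Set H) (n : ℕ) (ε : ℝ) : Prop :=
  ∃ (q : ℕ) (y : Fin q → H), q ≤ 2 ^ n ∧ S ⊆ ⋃ j, Metric.closedBall (y j) ε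

/-!
Write `e_i` for the Newton basis element of the selected point `x_{i+1}` relative to `X_i` and
`p_i = P_{X_i}(x_{i+1})`. Since `r_i - r_{n+1} ∈ V(X_i)`, the value `r_i(x_{i+1})` equals
`p_i ⟪e_i, r_{n+1}⟫`, and the selection rule then gives, with `μ = max 1 β`,
`‖r_i‖_∞^μ ≤ γ_i⁻¹ p_i |⟪e_i, r_{n+1}⟫|^β ‖r_{n+1}‖^(μ-β)`.
Multiply these over `n < i ≤ 2n`. The `e_i` are orthonormal, so Bessel and AM-GM bound the product
of the coefficients by `(‖r_{n+1}‖ / √n)^n`. The product of the `p_i` is the determinant of the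
triangular matrix `(⟪e_i, Φ(x_{j+1})⟫)`, which maps the unit `ℓ¹`-ball into the coordinates of
`acx Φ(Ω)`. Comparing volumes with the `2^n` covering balls gives `∏ p_i ≤ (√(5n) ε)^n`, since
`n! π^(n/2) ≤ (5n)^(n/2) Γ(n/2 + 1)`.
-/

open Real Finset

section Interpolation

variable (Φ : Ω → H)

def interpSpace (X : Finset Ω) : Submodule ℝ H :=
  Submodule.span ℝ (Φ '' (X : Set Ω))

instance (X : Finset Ω) : FiniteDimensional ℝ (interpSpace Φ X) :=
  FiniteDimensional.span_of_finite ℝ (X.finite_toSet.image Φ)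

variable {Φ}

theorem interp_eq_starProjection (X : Finset Ω) (f : H) :
    interp Φ X f = (interpSpace Φ X).starProjection f := rfl

theorem interp_mem_interpSpace (X : Finset Ω) (f : H) : interp Φ X f ∈ interpSpace Φ X := by
  rw [interp_eq_starProjection]
  exact Submodule.starProjection_apply_mem _ f

theorem inner_sub_interp_eq_zero {X : Finset Ω} (f : H) {v : H} (hv : v ∈ interpSpace Φ X) :
    ⟪f - interp Φ X f, v⟫ = 0 := by
  rw [interp_eq_starProjection]
  exact Submodule.starProjection_inner_eq_zero f v hv

theorem interpSpace_mono {X Y : Finset Ω} (h : X ⊆ Y) : interpSpace Φ X ≤ interpSpace Φ Y :=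
  Submodule.span_mono (Set.image_mono (Finset.coe_subset.mpr h))

theorem map_mem_interpSpace {X : Finset Ω} {z : Ω} (h : z ∈ X) : Φ z ∈ interpSpace Φ X :=
  Submodule.subset_span (Set.mem_image_of_mem Φ h)

theorem norm_sub_interp_le {X : Finset Ω} (f : H) {w : H} (hw : w ∈ interpSpace Φ X) :
    ‖f - interp Φ X f‖ ≤ ‖f - w‖ := by
  rw [interp_eq_starProjection, Submodule.starProjection_minimal]
  change _ ≤ ‖f - (⟨w, hw⟩ : interpSpace Φ X)‖
  exact ciInf_le ⟨0, Set.forall_mem_range.mpr fun _ => norm_nonneg _⟩ _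

theorem norm_sub_interp_le_of_subset {X Y : Finset Ω} (h : Y ⊆ X) (f : H) :
    ‖f - interp Φ X f‖ ≤ ‖f - interp Φ Y f‖ :=
  norm_sub_interp_le f (interpSpace_mono h (interp_mem_interpSpace Y f))

variable (Φ) in
theorem powerFun_nonneg (X : Finset Ω) (z : Ω) : 0 ≤ powerFun Φ X z :=
  norm_nonneg _

theorem powerFun_le_one {X : Finset Ω} {z : Ω} (hz : ‖Φ z‖ ≤ 1) : powerFun Φ X z ≤ 1 := by
  calc powerFun Φ X z ≤ ‖Φ z - 0‖ := norm_sub_interp_le _ (Submodule.zero_mem _)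
    _ ≤ 1 := by rwa [sub_zero]

theorem inner_sub_interp_eq (X : Finset Ω) (f g : H) :
    ⟪f - interp Φ X f, g⟫ = ⟪f - interp Φ X f, g - interp Φ X g⟫ := by
  rw [inner_sub_right, inner_sub_interp_eq_zero f (interp_mem_interpSpace X g), sub_zero]

theorem abs_inner_sub_interp_le (X : Finset Ω) (f : H) (z : Ω) :
    |⟪f - interp Φ X f, Φ z⟫| ≤ powerFun Φ X z * ‖f - interp Φ X f‖ := by
  rw [inner_sub_interp_eq, mul_comm]
  exact abs_real_inner_le_norm _ _

end Interpolation

section NewtonBasis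

variable {Φ : Ω → H}

variable (Φ) in
/-- The Newton basis of kernel interpolation; it is `0` when `P_X(z) = 0`. -/
noncomputable def newtonBasis (X : Finset Ω) (z : Ω) : H :=
  (powerFun Φ X z)⁻¹ • (Φ z - interp Φ X (Φ z))

theorem powerFun_smul_newtonBasis (X : Finset Ω) (z : Ω) :
    powerFun Φ X z • newtonBasis Φ X z = Φ z - interp Φ X (Φ z) := by
  rcases eq_or_ne (powerFun Φ X z) 0 with h | h
  · rw [h, zero_smul, eq_comm, ← norm_eq_zero]
    exact h
  · exact smul_inv_smul₀ h _

theorem norm_newtonBasis {X : Finset Ω} {z : Ω} (h : 0 < powerFun Φ X z) :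
    ‖newtonBasis Φ X z‖ = 1 := by
  rw [newtonBasis, norm_smul, norm_inv, Real.norm_of_nonneg h.le]
  exact inv_mul_cancel₀ h.ne'

theorem inner_newtonBasis_eq_zero {X : Finset Ω} (z : Ω) {v : H} (hv : v ∈ interpSpace Φ X) :
    ⟪newtonBasis Φ X z, v⟫ = 0 := by
  rw [newtonBasis, real_inner_smul_left, inner_sub_interp_eq_zero _ hv, mul_zero]

theorem newtonBasis_mem_interpSpace {X Y : Finset Ω} {z : Ω} (hXY : X ⊆ Y) (hz : z ∈ Y) :
    newtonBasis Φ X z ∈ interpSpace Φ Y :=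
  Submodule.smul_mem _ _ <| Submodule.sub_mem _ (map_mem_interpSpace hz)
    (interpSpace_mono hXY (interp_mem_interpSpace X _))

theorem inner_newtonBasis_self (X : Finset Ω) (z : Ω) :
    ⟪newtonBasis Φ X z, Φ z⟫ = powerFun Φ X z := by
  have h : ⟪newtonBasis Φ X z, Φ z⟫ = ⟪newtonBasis Φ X z, Φ z - interp Φ X (Φ z)⟫ := by
    rw [inner_sub_right, inner_newtonBasis_eq_zero z (interp_mem_interpSpace X _), sub_zero]
  rw [h, ← powerFun_smul_newtonBasis, real_inner_smul_right, real_inner_self_eq_norm_sq]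
  rcases (powerFun_nonneg Φ X z).eq_or_lt with h0 | hpos
  · rw [← h0, zero_mul]
  · rw [norm_newtonBasis hpos, one_pow, mul_one]

/-- `r_Y - r_X ∈ V(X)` is orthogonal to the Newton basis element. -/
theorem inner_sub_interp_eq_powerFun_mul {X Y : Finset Ω} (hYX : Y ⊆ X) (f : H) (z : Ω) :
    ⟪f - interp Φ X f, Φ z⟫ = powerFun Φ X z * ⟪newtonBasis Φ X z, f - interp Φ Y f⟫ := by
  have hdiff : (f - interp Φ Y f) - (f - interp Φ X f) ∈ interpSpace Φ X := by
    rw [sub_sub_sub_cancel_left]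
    exact Submodule.sub_mem _ (interp_mem_interpSpace X f)
      (interpSpace_mono hYX (interp_mem_interpSpace Y f))
  have hcoef : ⟪newtonBasis Φ X z, f - interp Φ Y f⟫ = ⟪newtonBasis Φ X z, f - interp Φ X f⟫ := by
    rw [← sub_eq_zero, ← inner_sub_right]
    exact inner_newtonBasis_eq_zero z hdiff
  rw [inner_sub_interp_eq, ← powerFun_smul_newtonBasis, real_inner_smul_right, real_inner_comm,
    hcoef]

end NewtonBasis

section Greedy

theorem Xset_mono (x : ℕ → Ω) {i j : ℕ} (h : i ≤ j) : Xset x i ⊆ Xset x j := by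
  classical
  unfold Xset
  exact Finset.image_subset_image (Finset.Icc_subset_Icc_right h)

theorem mem_Xset (x : ℕ → Ω) {i j : ℕ} (h1 : 1 ≤ i) (h2 : i ≤ j) : x i ∈ Xset x j := by
  classical
  unfold Xset
  exact Finset.mem_image_of_mem x (Finset.mem_Icc.mpr ⟨h1, h2⟩)

variable {Φ : Ω → H} (x : ℕ → Ω)

theorem inner_newtonBasis_Xset_eq_zero {i j : ℕ} (hij : i < j) :
    ⟪newtonBasis Φ (Xset x j) (x (j + 1)), newtonBasis Φ (Xset x i) (x (i + 1))⟫ = 0 :=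
  inner_newtonBasis_eq_zero _
    (newtonBasis_mem_interpSpace (Xset_mono x hij.le) (mem_Xset x (by omega) hij))

theorem orthonormal_newtonBasis_Xset {ι : Type*} {s : ι → ℕ} (hs : Function.Injective s)
    (hp : ∀ k, 0 < powerFun Φ (Xset x (s k)) (x (s k + 1))) :
    Orthonormal ℝ fun k => newtonBasis Φ (Xset x (s k)) (x (s k + 1)) := by
  refine ⟨fun k => norm_newtonBasis (hp k), fun k l hkl => ?_⟩
  rcases lt_or_gt_of_ne (hs.ne hkl) with h | h
  · rw [real_inner_comm]
    exact inner_newtonBasis_Xset_eq_zero x h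
  · exact inner_newtonBasis_Xset_eq_zero x h

end Greedy

section SupNorm

variable {Φ : Ω → H}

theorem supNorm_nonneg (g : H) : 0 ≤ supNorm Φ g :=
  Real.iSup_nonneg fun _ => abs_nonneg _

theorem rpow_supNorm_le {g : H} {μ c : ℝ} (hμ : 0 < μ) (hc : 0 ≤ c)
    (h : ∀ z, |⟪g, Φ z⟫| ^ μ ≤ c) : supNorm Φ g ^ μ ≤ c := by
  rw [← Real.le_rpow_inv_iff_of_pos (supNorm_nonneg g) hc hμ]
  exact Real.iSup_le (fun z => (Real.le_rpow_inv_iff_of_pos (abs_nonneg _) hc hμ).2 (h z))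
    (by positivity)

end SupNorm

section GreedyStep

theorem mul_rpow_mul_rpow_one_sub {p A : ℝ} (hp : 0 ≤ p) (hA : 0 ≤ A) (β : ℝ) :
    (p * A) ^ β * p ^ (1 - β) = p * A ^ β := by
  rcases hp.eq_or_lt with rfl | hp
  · rcases eq_or_ne β 0 with rfl | hβ
    · simp
    · simp [Real.zero_rpow hβ]
  · rw [Real.mul_rpow hp.le hA, mul_right_comm, ← Real.rpow_add hp, add_sub_cancel, Real.rpow_one]

/-- For `β ≤ 1` the missing factor `s ^ (1 - β)` is paid for by `s ≤ P R`; for `β > 1` the factor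
`P ^ (1 - β) ≥ 1` can simply be dropped. -/
theorem rpow_max_one_le_of_score_le {β γ s P R p A : ℝ} (hγ : 0 < γ) (hs : 0 ≤ s) (hP : P ≤ 1)
    (hR : 0 ≤ R) (hsPR : s ≤ P * R) (hp : 0 ≤ p) (hA : 0 ≤ A)
    (h : γ * s ^ β * P ^ (1 - β) ≤ (p * A) ^ β * p ^ (1 - β)) :
    s ^ max 1 β ≤ γ⁻¹ * (p * A ^ β * R ^ (max 1 β - β)) := by
  rw [mul_rpow_mul_rpow_one_sub hp hA] at h
  rw [le_inv_mul_iff₀ hγ]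
  rcases hs.eq_or_lt with rfl | hs
  · rw [Real.zero_rpow (by positivity), mul_zero]
    positivity
  have hP0 : 0 < P := pos_of_mul_pos_left (hs.trans_le hsPR) hR
  rcases le_or_gt β 1 with hβ | hβ
  · rw [max_eq_left hβ, Real.rpow_one]
    calc γ * s = γ * s ^ β * s ^ (1 - β) := by
          rw [mul_assoc, ← Real.rpow_add hs, add_sub_cancel, Real.rpow_one]
      _ ≤ γ * s ^ β * (P ^ (1 - β) * R ^ (1 - β)) := by
          rw [← Real.mul_rpow hP0.le hR]
          gcongr
      _ = γ * s ^ β * P ^ (1 - β) * R ^ (1 - β) := by ring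
      _ ≤ p * A ^ β * R ^ (1 - β) := by gcongr
  · rw [max_eq_right hβ.le, sub_self, Real.rpow_zero, mul_one]
    refine le_trans ?_ h
    exact le_mul_of_one_le_right (by positivity)
      (Real.one_le_rpow_of_pos_of_le_one_of_nonpos hP0 hP (by linarith))

variable {Φ : Ω → H}

theorem rpow_supNorm_sub_interp_le (hΦ : ∀ z, ‖Φ z‖ ≤ 1) {X Y : Finset Ω} (hYX : Y ⊆ X)
    (f : H) {β γ : ℝ} (hγ : 0 < γ) {z₀ : Ω}
    (hsel : ∀ z, γ * |⟪f - interp Φ X f, Φ z⟫| ^ β * powerFun Φ X z ^ (1 - β)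
      ≤ |⟪f - interp Φ X f, Φ z₀⟫| ^ β * powerFun Φ X z₀ ^ (1 - β)) :
    supNorm Φ (f - interp Φ X f) ^ max 1 β
      ≤ γ⁻¹ * (powerFun Φ X z₀ * |⟪newtonBasis Φ X z₀, f - interp Φ Y f⟫| ^ β
          * ‖f - interp Φ Y f‖ ^ (max 1 β - β)) := by
  have hp := powerFun_nonneg Φ X z₀
  refine rpow_supNorm_le (by positivity) (by positivity) fun z => ?_
  have hbound : |⟪f - interp Φ X f, Φ z⟫| ≤ powerFun Φ X z * ‖f - interp Φ Y f‖ :=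
    (abs_inner_sub_interp_le X f z).trans
      (mul_le_mul_of_nonneg_left (norm_sub_interp_le_of_subset hYX f) (powerFun_nonneg Φ X z))
  refine rpow_max_one_le_of_score_le hγ (abs_nonneg _) (powerFun_le_one (hΦ z)) (norm_nonneg _)
    hbound hp (abs_nonneg _) ?_
  rw [← abs_of_nonneg hp, ← abs_mul, ← inner_sub_interp_eq_powerFun_mul hYX, abs_of_nonneg hp]
  exact hsel z

end GreedyStep

section Gamma

open Nat

theorem three_mul_pow_le_add_two_pow {m : ℕ} (hm : 1 ≤ m) :
    3 * (m : ℝ) ^ m ≤ ((m : ℝ) + 2) ^ m := by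
  have hm0 : (0 : ℝ) < m := by exact_mod_cast hm
  have hbern : 3 ≤ (1 + 2 / (m : ℝ)) ^ m := by
    have h2m : 0 ≤ 2 / (m : ℝ) := by positivity
    have hb := one_add_mul_le_pow (a := 2 / (m : ℝ)) (by linarith) m
    rw [mul_div_cancel₀ _ hm0.ne'] at hb
    linarith
  calc 3 * (m : ℝ) ^ m ≤ (1 + 2 / (m : ℝ)) ^ m * (m : ℝ) ^ m := by gcongr
    _ = ((m : ℝ) + 2) ^ m := by rw [← mul_pow]; congr 1; field_simp

/-- The recursion `n ↦ n + 2` multiplies the left side by `(n + 2)² (n + 1)² π² ≤ 16 (n + 2)⁴` and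
the right side by at least `3 · 25 (n + 2)² (n / 2 + 1)²`. -/
theorem factorial_sq_mul_pi_pow_le_add_two {m : ℕ} (hm : 1 ≤ m)
    (ih : ((m ! : ℕ) : ℝ) ^ 2 * π ^ m ≤ (5 * m) ^ m * Real.Gamma (m / 2 + 1) ^ 2) :
    (((m + 2) ! : ℕ) : ℝ) ^ 2 * π ^ (m + 2)
      ≤ (5 * ((m + 2 : ℕ) : ℝ)) ^ (m + 2) * Real.Gamma (((m + 2 : ℕ) : ℝ) / 2 + 1) ^ 2 := by
  have hfac : (((m + 2) ! : ℕ) : ℝ) = ((m : ℝ) + 2) * ((m : ℝ) + 1) * (m ! : ℝ) := by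
    rw [Nat.factorial_succ, Nat.factorial_succ]
    push_cast
    ring
  have hΓ : Real.Gamma (((m + 2 : ℕ) : ℝ) / 2 + 1)
      = ((m : ℝ) / 2 + 1) * Real.Gamma (m / 2 + 1) := by
    rw [show ((m + 2 : ℕ) : ℝ) / 2 + 1 = ((m : ℝ) / 2 + 1) + 1 by push_cast; ring,
      Real.Gamma_add_one (by positivity)]
  have hpow : (5 * (m : ℝ)) ^ m ≤ (5 * ((m : ℝ) + 2)) ^ m / 3 := by
    rw [le_div_iff₀ three_pos, mul_pow, mul_pow, mul_assoc, mul_comm _ (3 : ℝ)]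
    gcongr
    exact three_mul_pow_le_add_two_pow hm
  have hπ : π ^ 2 ≤ 16 := by nlinarith [Real.pi_le_four, Real.pi_pos]
  rw [hfac, hΓ]
  push_cast
  calc (((m : ℝ) + 2) * ((m : ℝ) + 1) * (m ! : ℝ)) ^ 2 * π ^ (m + 2)
      = ((m : ℝ) + 2) ^ 2 * ((m : ℝ) + 1) ^ 2 * π ^ 2 * ((m ! : ℝ) ^ 2 * π ^ m) := by ring
    _ ≤ ((m : ℝ) + 2) ^ 2 * ((m : ℝ) + 2) ^ 2 * 16
          * ((5 * (m : ℝ)) ^ m * Real.Gamma (m / 2 + 1) ^ 2) := by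
        gcongr
        linarith
    _ ≤ ((m : ℝ) + 2) ^ 2 * ((m : ℝ) + 2) ^ 2 * 16
          * ((5 * ((m : ℝ) + 2)) ^ m / 3 * Real.Gamma (m / 2 + 1) ^ 2) := by
        gcongr ?_ * (?_ * _)
    _ = (5 * ((m : ℝ) + 2)) ^ m * Real.Gamma (m / 2 + 1) ^ 2 * (16 / 3 * ((m : ℝ) + 2) ^ 4) := by
        ring
    _ ≤ (5 * ((m : ℝ) + 2)) ^ m * Real.Gamma (m / 2 + 1) ^ 2 * (25 / 4 * ((m : ℝ) + 2) ^ 4) := by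
        gcongr _ * ?_
        exact mul_le_mul_of_nonneg_right (by norm_num) (by positivity)
    _ = (5 * ((m : ℝ) + 2)) ^ (m + 2) * (((m : ℝ) / 2 + 1) * Real.Gamma (m / 2 + 1)) ^ 2 := by
        ring

theorem factorial_sq_mul_pi_pow_le : ∀ n : ℕ, 1 ≤ n →
    ((n ! : ℕ) : ℝ) ^ 2 * π ^ n ≤ (5 * n) ^ n * Real.Gamma (n / 2 + 1) ^ 2
  | 1, _ => by
    have hΓ : Real.Gamma ((1 : ℕ) / 2 + 1) = √π / 2 := by
      rw [Nat.cast_one, Real.Gamma_add_one (by norm_num), Real.Gamma_one_half_eq]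
      ring
    rw [hΓ, div_pow, Real.sq_sqrt Real.pi_nonneg]
    norm_num
    nlinarith [Real.pi_pos]
  | 2, _ => by
    norm_num [Nat.factorial, Real.Gamma_two]
    nlinarith [Real.pi_le_four, Real.pi_pos]
  | k + 3, _ =>
    factorial_sq_mul_pi_pow_le_add_two (by omega) (factorial_sq_mul_pi_pow_le (k + 1) (by omega))

theorem factorial_mul_sqrt_pi_pow_le {n : ℕ} (hn : 1 ≤ n) :
    (n ! : ℝ) * √π ^ n ≤ (√5 * √n) ^ n * Real.Gamma (n / 2 + 1) := by
  have hΓ : 0 < Real.Gamma (n / 2 + 1) := Real.Gamma_pos_of_pos (by positivity)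
  refine (pow_le_pow_iff_left₀ (by positivity) (by positivity) two_ne_zero).1 ?_
  rw [mul_pow, mul_pow, ← pow_mul, mul_comm n 2, pow_mul, Real.sq_sqrt Real.pi_nonneg, ← pow_mul,
    mul_comm n 2, pow_mul, mul_pow, Real.sq_sqrt (by norm_num), Real.sq_sqrt (Nat.cast_nonneg n)]
  exact factorial_sq_mul_pi_pow_le n hn

end Gamma

section Volume

open MeasureTheory

variable {ι : Type*} [Fintype ι]

theorem sum_smul_mem_acx {K : Set H} {c : ι → ℝ} {g : ι → H} (hg : ∀ k, g k ∈ K)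
    (hc : ∑ k, |c k| ≤ 1) : ∑ k, c k • g k ∈ acx K := by
  let σ := (Fintype.equivFin ι).symm
  refine subset_closure ⟨Fintype.card ι, c ∘ σ, g ∘ σ, fun j => hg _, ?_, ?_⟩
  · exact (σ.sum_comp fun k => |c k|).trans_le hc
  · simp only [Function.comp_apply, σ.sum_comp (fun k => c k • g k)]

theorem norm_toLp_inner_le {e : ι → H} (he : Orthonormal ℝ e) (h : H) :
    ‖WithLp.toLp 2 (fun k => ⟪e k, h⟫)‖ ≤ ‖h‖ := by
  rw [EuclideanSpace.norm_eq, ← Real.sqrt_sq (norm_nonneg h)]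
  exact Real.sqrt_le_sqrt (he.sum_inner_products_le h)

theorem det_pi_inner_comp_linearCombination [LinearOrder ι] {φ e : ι → H}
    (htri : ∀ j k, j < k → ⟪e k, φ j⟫ = 0) :
    LinearMap.det (LinearMap.pi (fun k => innerₛₗ ℝ (e k)) ∘ₗ Fintype.linearCombination ℝ φ)
      = ∏ k, ⟪e k, φ k⟫ := by
  classical
  have hentry : ∀ i j, LinearMap.toMatrix'
      (LinearMap.pi (fun k => innerₛₗ ℝ (e k)) ∘ₗ Fintype.linearCombination ℝ φ) i j
        = ⟪e i, φ j⟫ := by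
    intro i j
    simp [LinearMap.toMatrix'_apply]
  rw [← LinearMap.det_toMatrix', Matrix.det_of_isUpperTriangular]
  · simp only [hentry]
  · intro i j hji
    rw [hentry]
    exact htri j i hji

theorem volume_l1Ball [Nonempty ι] :
    volume {c : ι → ℝ | ∑ k, |c k| ≤ 1}
      = ENNReal.ofReal (2 ^ Fintype.card ι / (Fintype.card ι).factorial) := by
  have h := volume_sum_rpow_le (ι := ι) le_rfl 1
  simp only [Real.rpow_one, div_one, ENNReal.ofReal_one, one_pow, one_mul] at h
  rw [h, one_add_one_eq_two, Real.Gamma_two, mul_one, Real.Gamma_nat_eq_factorial]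

variable [LinearOrder ι] [Nonempty ι] {K : Set H} {ε : ℝ} {φ e : ι → H}

theorem abs_prod_inner_mul_le_of_hasCover (hε : 0 ≤ ε)
    (hcov : HasCover (acx K) (Fintype.card ι) ε) (hφ : ∀ k, φ k ∈ K) (he : Orthonormal ℝ e)
    (htri : ∀ j k, j < k → ⟪e k, φ j⟫ = 0) :
    |∏ k, ⟪e k, φ k⟫| * (2 ^ Fintype.card ι / (Fintype.card ι).factorial)
      ≤ 2 ^ Fintype.card ι * (ε ^ Fintype.card ι
          * (√π ^ Fintype.card ι / Real.Gamma (Fintype.card ι / 2 + 1))) := by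
  obtain ⟨q, y, hq, hsub⟩ := hcov
  set N := Fintype.card ι
  set T : H →ₗ[ℝ] ι → ℝ := LinearMap.pi fun k => innerₛₗ ℝ (e k)
  set B := {c : ι → ℝ | ∑ k, |c k| ≤ 1}
  set ball := fun j => WithLp.toLp 2 ⁻¹' Metric.closedBall (WithLp.toLp 2 (T (y j))) ε
  have hcover : (T ∘ₗ Fintype.linearCombination ℝ φ) '' B ⊆ ⋃ j, ball j := by
    rintro _ ⟨c, hc, rfl⟩
    obtain ⟨j, hj⟩ := Set.mem_iUnion.mp (hsub (sum_smul_mem_acx hφ hc))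
    refine Set.mem_iUnion.mpr ⟨j, ?_⟩
    rw [Metric.mem_closedBall, dist_eq_norm] at hj
    rw [Set.mem_preimage, Metric.mem_closedBall, dist_eq_norm, ← WithLp.toLp_sub,
      LinearMap.comp_apply, ← map_sub]
    exact (norm_toLp_inner_le he _).trans hj
  rw [← ENNReal.ofReal_le_ofReal_iff (by positivity), ENNReal.ofReal_mul (abs_nonneg _),
    ← volume_l1Ball, ← det_pi_inner_comp_linearCombination htri,
    ← Measure.addHaar_image_linearMap, ENNReal.ofReal_mul (by positivity),
    ENNReal.ofReal_mul (by positivity), ENNReal.ofReal_pow hε]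
  calc volume ((T ∘ₗ Fintype.linearCombination ℝ φ) '' B)
      ≤ ∑ j, volume (ball j) := (measure_mono hcover).trans (measure_iUnion_fintype_le _ _)
    _ = q * (ENNReal.ofReal ε ^ N * ENNReal.ofReal (√π ^ N / Real.Gamma (N / 2 + 1))) := by
        simp [ball, (PiLp.volume_preserving_toLp ι).measure_preimage
          Metric.isClosed_closedBall.measurableSet.nullMeasurableSet,
          EuclideanSpace.volume_closedBall, N]
    _ ≤ ENNReal.ofReal (2 ^ N)
          * (ENNReal.ofReal ε ^ N * ENNReal.ofReal (√π ^ N / Real.Gamma (N / 2 + 1))) := by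
        gcongr
        rw [ENNReal.ofReal_pow zero_le_two, ENNReal.ofReal_ofNat]
        exact_mod_cast hq

theorem prod_abs_inner_le_of_hasCover (hε : 0 ≤ ε) (hcov : HasCover (acx K) (Fintype.card ι) ε)
    (hφ : ∀ k, φ k ∈ K) (he : Orthonormal ℝ e) (htri : ∀ j k, j < k → ⟪e k, φ j⟫ = 0) :
    ∏ k, |⟪e k, φ k⟫| ≤ (√5 * √(Fintype.card ι) * ε) ^ Fintype.card ι := by
  have hvol := abs_prod_inner_mul_le_of_hasCover hε hcov hφ he htri
  set N := Fintype.card ι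
  have hΓ : 0 < Real.Gamma (N / 2 + 1) := Real.Gamma_pos_of_pos (by positivity)
  have hN : (0 : ℝ) < N.factorial := by positivity
  rw [← Finset.abs_prod]
  calc |∏ k, ⟪e k, φ k⟫|
      = |∏ k, ⟪e k, φ k⟫| * (2 ^ N / N.factorial) * (N.factorial / 2 ^ N) := by field_simp
    _ ≤ 2 ^ N * (ε ^ N * (√π ^ N / Real.Gamma (N / 2 + 1))) * (N.factorial / 2 ^ N) := by
        gcongr
    _ = ε ^ N * (N.factorial * √π ^ N / Real.Gamma (N / 2 + 1)) := by field_simp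
    _ ≤ ε ^ N * (√5 * √N) ^ N := by
        gcongr
        rw [div_le_iff₀ hΓ]
        exact factorial_mul_sqrt_pi_pow_le Fintype.card_pos
    _ = (√5 * √N * ε) ^ N := by rw [mul_pow _ ε, mul_comm]

end Volume

section Aggregation

theorem prod_abs_le_of_sum_sq_le {ι : Type*} {s : Finset ι} (hs : s.Nonempty) {a : ι → ℝ} {R : ℝ}
    (hR : 0 ≤ R) (h : ∑ i ∈ s, a i ^ 2 ≤ R ^ 2) : ∏ i ∈ s, |a i| ≤ (R / √(#s : ℝ)) ^ #s := by
  have hn : (0 : ℝ) < #s := by exact_mod_cast hs.card_pos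
  have hamgm : ∏ i ∈ s, (a i ^ 2) ^ (#s : ℝ)⁻¹ ≤ ∑ i ∈ s, (#s : ℝ)⁻¹ * a i ^ 2 :=
    Real.geom_mean_le_arith_mean_weighted s _ _ (fun _ _ => by positivity)
      (by simp [hn.ne']) (fun _ _ => sq_nonneg _)
  rw [Real.finsetProd_rpow _ _ (fun _ _ => sq_nonneg _), ← Finset.mul_sum,
    Real.rpow_inv_le_iff_of_pos (by positivity) (by positivity) hn, Real.rpow_natCast] at hamgm
  refine (pow_le_pow_iff_left₀ (by positivity) (by positivity) two_ne_zero).1 ?_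
  calc (∏ i ∈ s, |a i|) ^ 2 = ∏ i ∈ s, a i ^ 2 := by simp [← Finset.prod_pow, sq_abs]
    _ ≤ ((#s : ℝ)⁻¹ * ∑ i ∈ s, a i ^ 2) ^ #s := hamgm
    _ ≤ ((#s : ℝ)⁻¹ * R ^ 2) ^ #s := by gcongr
    _ = ((R / √(#s : ℝ)) ^ #s) ^ 2 := by
        rw [← pow_mul, mul_comm #s, pow_mul, div_pow, Real.sq_sqrt hn.le, inv_mul_eq_div]

theorem le_of_rpow_pow_le {n : ℕ} (hn : n ≠ 0) {μ L G C : ℝ} (hμ : 1 ≤ μ) (hL : 0 ≤ L)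
    (hG0 : 0 < G) (hG1 : G ≤ 1) (hC : 0 ≤ C) (h : (L ^ μ) ^ n ≤ G⁻¹ * C ^ n) :
    L ≤ (G ^ (1 / (n : ℝ)))⁻¹ * C ^ (1 / μ) := by
  have hμ0 : 0 < μ := by linarith
  have hroot : L ^ μ ≤ (G ^ (1 / (n : ℝ)))⁻¹ * C := by
    refine (pow_le_pow_iff_left₀ (by positivity) (by positivity) hn).1 ?_
    rwa [mul_pow, ← Real.inv_rpow hG0.le, one_div, Real.rpow_inv_natCast_pow (by positivity) hn]
  set g := (G ^ (1 / (n : ℝ)))⁻¹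
  have hg : 1 ≤ g := one_le_inv₀ (by positivity) |>.2 (Real.rpow_le_one hG0.le hG1 (by positivity))
  calc L ≤ (g * C) ^ (1 / μ) := by
        rw [one_div, Real.le_rpow_inv_iff_of_pos hL (by positivity) hμ0]
        exact hroot
    _ = g ^ (1 / μ) * C ^ (1 / μ) := Real.mul_rpow (by positivity) hC
    _ ≤ g * C ^ (1 / μ) := by
        gcongr
        calc g ^ (1 / μ) ≤ g ^ (1 : ℝ) :=
              Real.rpow_le_rpow_of_exponent_le hg ((div_le_one hμ0).2 hμ)
          _ = g := Real.rpow_one g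

theorem le_of_forall_rpow_le_of_prod_le {ι : Type*} {s : Finset ι} (hs : s.Nonempty) {β μ L R D : ℝ}
    {γ p a : ι → ℝ} (hβ : 0 ≤ β) (hμ : 1 ≤ μ) (hL : 0 ≤ L) (hR : 0 ≤ R) (hD : 0 ≤ D)
    (hγ0 : ∀ i ∈ s, 0 < γ i) (hγ1 : ∀ i ∈ s, γ i ≤ 1)
    (hstep : ∀ i ∈ s, L ^ μ ≤ (γ i)⁻¹ * (p i * |a i| ^ β * R ^ (μ - β)))
    (hprod : ∏ i ∈ s, p i ≤ D ^ #s) (hsum : ∑ i ∈ s, a i ^ 2 ≤ R ^ 2) :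
    L ≤ ((∏ i ∈ s, γ i) ^ (1 / (#s : ℝ)))⁻¹ * (D / √(#s : ℝ) ^ β) ^ (1 / μ) * R := by
  set n := #s
  have hG0 : 0 < ∏ i ∈ s, γ i := prod_pos hγ0
  have hC : D * (R / √(n : ℝ)) ^ β * R ^ (μ - β) = D / √(n : ℝ) ^ β * R ^ μ := by
    rw [Real.div_rpow hR (Real.sqrt_nonneg _), mul_assoc, div_mul_eq_mul_div, ← Real.rpow_add' hR
      (by rw [add_sub_cancel]; positivity), add_sub_cancel, mul_div_assoc', mul_div_right_comm]
  have hprodstep : (L ^ μ) ^ n ≤ (∏ i ∈ s, γ i)⁻¹ * (D / √(n : ℝ) ^ β * R ^ μ) ^ n := by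
    calc (L ^ μ) ^ n = ∏ i ∈ s, L ^ μ := (prod_const _).symm
      _ ≤ ∏ i ∈ s, (γ i)⁻¹ * (p i * |a i| ^ β * R ^ (μ - β)) :=
          prod_le_prod (fun _ _ => by positivity) hstep
      _ = (∏ i ∈ s, γ i)⁻¹ * ((∏ i ∈ s, p i) * (∏ i ∈ s, |a i|) ^ β * (R ^ (μ - β)) ^ n) := by
          rw [prod_mul_distrib, prod_mul_distrib, prod_mul_distrib, prod_inv_distrib,
            Real.finsetProd_rpow _ _ (fun _ _ => abs_nonneg _), prod_const]
      _ ≤ (∏ i ∈ s, γ i)⁻¹ * (D ^ n * ((R / √(n : ℝ)) ^ n) ^ β * (R ^ (μ - β)) ^ n) := by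
          have hamgm := prod_abs_le_of_sum_sq_le hs hR hsum
          have ha : 0 ≤ ∏ i ∈ s, |a i| := prod_nonneg fun _ _ => abs_nonneg _
          gcongr
      _ = (∏ i ∈ s, γ i)⁻¹ * (D / √(n : ℝ) ^ β * R ^ μ) ^ n := by
          rw [← Real.rpow_pow_comm (by positivity), ← mul_pow, ← mul_pow, hC]
  have hn : n ≠ 0 := hs.card_pos.ne'
  calc L ≤ ((∏ i ∈ s, γ i) ^ (1 / (n : ℝ)))⁻¹ * (D / √(n : ℝ) ^ β * R ^ μ) ^ (1 / μ) :=
        le_of_rpow_pow_le hn hμ hL hG0 (prod_le_one (fun i hi => (hγ0 i hi).le) hγ1)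
          (by positivity) hprodstep
    _ = _ := by
        have hRμ : (R ^ μ) ^ (1 / μ) = R := by
          rw [one_div, Real.rpow_rpow_inv hR (by positivity)]
        rw [Real.mul_rpow (by positivity) (by positivity), hRμ, mul_assoc]

theorem sqrt_div_sqrt_rpow {t : ℝ} (ht : 0 < t) (β : ℝ) : √t / √t ^ β = t ^ ((1 - β) / 2) := by
  rw [Real.sqrt_eq_rpow, ← Real.rpow_mul ht.le, ← Real.rpow_sub ht]
  ring_nf

end Aggregation

section Window

variable {Φ : Ω → H} (x : ℕ → Ω) {s : Finset ℕ}

theorem prod_powerFun_le_of_hasCover (hs : s.Nonempty)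
    (hp : ∀ i ∈ s, 0 < powerFun Φ (Xset x i) (x (i + 1))) {ε : ℝ} (hε : 0 ≤ ε)
    (hcov : HasCover (acx (Set.range Φ)) #s ε) :
    ∏ i ∈ s, powerFun Φ (Xset x i) (x (i + 1)) ≤ (√5 * √(#s : ℝ) * ε) ^ #s := by
  have : Nonempty s := hs.to_subtype
  have h := prod_abs_inner_le_of_hasCover hε (by rwa [Fintype.card_coe])
    (φ := fun i : s => Φ (x (i + 1))) (fun _ => Set.mem_range_self _)
    (orthonormal_newtonBasis_Xset x Subtype.val_injective fun i => hp i i.2)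
    fun j k hjk => inner_newtonBasis_eq_zero _ (map_mem_interpSpace (mem_Xset x (by omega) hjk))
  rw [Fintype.card_coe] at h
  calc ∏ i ∈ s, powerFun Φ (Xset x i) (x (i + 1))
      = ∏ i : s, |⟪newtonBasis Φ (Xset x i) (x (i + 1)), Φ (x (i + 1))⟫| := by
        rw [← prod_coe_sort]
        exact prod_congr rfl fun i _ => by rw [inner_newtonBasis_self, abs_of_pos (hp i i.2)]
    _ ≤ _ := h

theorem sum_sq_inner_newtonBasis_le (hp : ∀ i ∈ s, 0 < powerFun Φ (Xset x i) (x (i + 1)))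
    (g : H) : ∑ i ∈ s, ⟪newtonBasis Φ (Xset x i) (x (i + 1)), g⟫ ^ 2 ≤ ‖g‖ ^ 2 := by
  rw [← sum_coe_sort]
  simpa only [Real.norm_eq_abs, sq_abs] using
    (orthonormal_newtonBasis_Xset x Subtype.val_injective fun i : s => hp i i.2)
      |>.sum_inner_products_le g (s := univ)

end Window

theorem statement_9
    (Φ : Ω → H) (hΦ : ∀ z : Ω, ‖Φ z‖ ≤ 1)
    (β : ℝ) (hβ : 0 ≤ β) (γ : ℕ → ℝ) (hγ0 : ∀ i, 0 < γ i) (hγ1 : ∀ i, γ i ≤ 1)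
    (f : H) (x : ℕ → Ω)
    (hx : ∀ (i : ℕ) (z : Ω),
      γ i * |⟪f - interp Φ (Xset x i) f, Φ z⟫| ^ β * powerFun Φ (Xset x i) z ^ (1 - β)
        ≤ |⟪f - interp Φ (Xset x i) f, Φ (x (i + 1))⟫| ^ β
            * powerFun Φ (Xset x i) (x (i + 1)) ^ (1 - β))
    (n : ℕ) (hn : 1 ≤ n) (ε : ℝ) (hε : 0 < ε)
    (hcov : HasCover (acx (Set.range Φ)) n ε) :
    (Finset.Icc (n + 1) (2 * n)).inf' (Finset.nonempty_Icc.mpr (by omega))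
        (fun i => supNorm Φ (f - interp Φ (Xset x i) f))
      ≤ ((∏ i ∈ Finset.Icc (n + 1) (2 * n), γ i) ^ (1 / (n : ℝ)))⁻¹
          * (Real.sqrt 5 * (n : ℝ) ^ ((1 - β) / 2) * ε) ^ (1 / max 1 β)
          * ‖f - interp Φ (Xset x (n + 1)) f‖ := by
  set s := Finset.Icc (n + 1) (2 * n)
  have hs : s.Nonempty := Finset.nonempty_Icc.mpr (by omega)
  have hcard : #s = n := by simp only [s, Nat.card_Icc]; omega
  set L := s.inf' hs fun i => supNorm Φ (f - interp Φ (Xset x i) f)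
  have hL : 0 ≤ L := le_inf' hs _ fun i _ => supNorm_nonneg _
  have hstep : ∀ i ∈ s, L ^ max 1 β ≤ (γ i)⁻¹ * (powerFun Φ (Xset x i) (x (i + 1))
      * |⟪newtonBasis Φ (Xset x i) (x (i + 1)), f - interp Φ (Xset x (n + 1)) f⟫| ^ β
      * ‖f - interp Φ (Xset x (n + 1)) f‖ ^ (max 1 β - β)) := fun i hi =>
    (Real.rpow_le_rpow hL (inf'_le _ hi) (by positivity)).trans
      (rpow_supNorm_sub_interp_le hΦ (Xset_mono x (mem_Icc.1 hi).1) f (hγ0 i) (hx i))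
  by_cases hp : ∀ i ∈ s, 0 < powerFun Φ (Xset x i) (x (i + 1))
  · calc L ≤ _ := le_of_forall_rpow_le_of_prod_le hs hβ (le_max_left 1 β) hL (norm_nonneg _)
          (by positivity) (fun i _ => hγ0 i) (fun i _ => hγ1 i) hstep
          (prod_powerFun_le_of_hasCover x hs hp hε.le (hcard ▸ hcov))
          (sum_sq_inner_newtonBasis_le x hp _)
      _ = _ := by rw [hcard, mul_div_right_comm, mul_div_assoc, sqrt_div_sqrt_rpow (by positivity)]
  · push Not at hp
    obtain ⟨i, hi, hpi⟩ := hp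
    have hLμ : L ^ max 1 β ≤ 0 := by
      simpa [le_antisymm hpi (powerFun_nonneg _ _ _)] using hstep i hi
    have hL0 : L ≤ 0 := not_lt.1 fun hpos => (Real.rpow_pos_of_pos hpos _).not_ge hLμ
    have hG : 0 ≤ ∏ i ∈ s, γ i := prod_nonneg fun i _ => (hγ0 i).le
    exact hL0.trans (by positivity)
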